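/- arXiv:1511.03998 — 2 statements merged into one kernel-verified Lean document; each statement's English description precedes it below -/
import Mathlib

section
/- The localizable generalized geometric measure of the N-qubit generalized GHZ state under single-qubit projective measurement equals its generalized geometric measure: E_L = min{|a₁|², |a₂|²}. -/
open scoped BigOperators

noncomputable section

namespace QI

/-- A pure state of a collection of qubits indexed by `ι`, given by its
amplitudes in the computational basis. -/
abbrev PureState (ι : Type) := (ι → Fin 2) → ℂ

variable {ι : Type} [Fintype ι] [DecidableEq ι]

/-- Squared norm of a pure state. -/
def nsq (ψ : PureState ι) : ℝ := ∑ x, Complex.normSq (ψ x)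

/-- Normalization of a pure state. -/
def normalize (ψ : PureState ι) : PureState ι :=
  fun x => ψ x / (Real.sqrt (nsq ψ) : ℂ)

/-- Combine configurations of the qubits in `A` and outside `A`. -/
def merge (A : Finset ι) (a : {i // i ∈ A} → Fin 2) (b : {i // i ∉ A} → Fin 2) :
    ι → Fin 2 := fun i => if h : i ∈ A then a ⟨i, h⟩ else b ⟨i, h⟩

/-- Reduced density matrix of the qubits in `A`. -/
def rdm (ψ : PureState ι) (A : Finset ι) :
    ({i // i ∈ A} → Fin 2) → ({i // i ∈ A} → Fin 2) → ℂ :=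
  fun a a' => ∑ b : {i // i ∉ A} → Fin 2, ψ (merge A a b) * star (ψ (merge A a' b))

/-- Maximal eigenvalue of a (Hermitian) matrix, via the Rayleigh quotient. -/
def maxEig {κ : Type} [Fintype κ] (ρ : κ → κ → ℂ) : ℝ :=
  ⨆ v : {v : κ → ℂ // ∑ i, Complex.normSq (v i) = 1},
    (∑ i, ∑ j, star (v.1 i) * ρ i j * v.1 j).re

/-- The generalized geometric measure: one minus the maximal squared Schmidt
coefficient over all nonempty proper bipartitions. -/
def GGM (ψ : PureState ι) : ℝ :=
  1 - ⨆ A : {A : Finset ι // A.Nonempty ∧ A ≠ Finset.univ}, maxEig (rdm ψ A.1)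

/-- Unnormalized post-measurement state on the remaining qubits after obtaining
the outcome corresponding to the basis vector `ξ` in a rank-1 projective
measurement on qubit `r`. -/
def collapse (ψ : PureState ι) (r : ι) (ξ : Fin 2 → ℂ) :
    PureState {i // i ≠ r} :=
  fun b => ∑ v : Fin 2, ξ v * ψ (fun i => if h : i = r then v else b ⟨i, h⟩)

/-- First measurement-basis vector `cos(θ/2)|0⟩ + e^{iφ} sin(θ/2)|1⟩`. -/
def xiUp (θ φ : ℝ) : Fin 2 → ℂ :=
  ![(Real.cos (θ/2) : ℂ), Complex.exp (φ * Complex.I) * (Real.sin (θ/2) : ℂ)]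

/-- Second measurement-basis vector `-e^{-iφ} sin(θ/2)|0⟩ + cos(θ/2)|1⟩`. -/
def xiDn (θ φ : ℝ) : Fin 2 → ℂ :=
  ![-(Complex.exp (-(φ * Complex.I))) * (Real.sin (θ/2) : ℂ), (Real.cos (θ/2) : ℂ)]

/-- Average post-measurement GGM for the projective measurement `(θ, φ)` on
qubit `r`. -/
def avgGGM (ψ : PureState ι) (r : ι) (θ φ : ℝ) : ℝ :=
  nsq (collapse ψ r (xiUp θ φ)) * GGM (normalize (collapse ψ r (xiUp θ φ))) +
  nsq (collapse ψ r (xiDn θ φ)) * GGM (normalize (collapse ψ r (xiDn θ φ)))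

/-- The localizable generalized geometric measure for single-qubit projective
measurement on qubit `r`. -/
def LGGM (ψ : PureState ι) (r : ι) : ℝ :=
  sSup {E | ∃ θ ∈ Set.Icc 0 Real.pi, ∃ φ ∈ Set.Ico 0 (2 * Real.pi),
    E = avgGGM ψ r θ φ}

/-- The generalized GHZ state `a₁|0…0⟩ + a₂|1…1⟩`. -/
def ghz (a1 a2 : ℂ) : PureState ι :=
  fun x => if x = fun _ => 0 then a1 else if x = fun _ => 1 then a2 else 0

/-- Computational basis vector with a single `1` at position `i`. -/
def basisVec (i : ι) : ι → Fin 2 := fun j => if j = i then 1 else 0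

/-- The generalized W state `Σᵢ aᵢ |0…1ᵢ…0⟩`. -/
def wState (a : ι → ℂ) : PureState ι :=
  fun x => ∑ i, if x = basisVec i then a i else 0

/-- The Dicke state with `k` excitations: equal superposition of all
computational basis states with exactly `k` ones. -/
def dicke (k : ℕ) : PureState ι :=
  fun x => if (∑ i, ((x i : ℕ))) = k
    then ((1 / Real.sqrt ((Fintype.card ι).choose k) : ℝ) : ℂ) else 0

end QI

/-!
For a GHZ state `b₁|0…0⟩ + b₂|1…1⟩` the reduced density matrix of every nonempty proper set of
qubits is diagonal, with `|b₁|²` and `|b₂|²` as its only nonzero entries, so after normalization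
its GGM is `1 - max (|b₁|², |b₂|²) / (|b₁|² + |b₂|²)`; weighted by the squared norm this is
`min (|b₁|², |b₂|²)`. Measuring one qubit in the basis `(θ, φ)` leaves unnormalized GHZ states on
the others, with amplitudes `(cos(θ/2) a₁, e^{iφ} sin(θ/2) a₂)` and
`(-e^{-iφ} sin(θ/2) a₁, cos(θ/2) a₂)`. The average GGM is therefore
`min (c² |a₁|², s² |a₂|²) + min (s² |a₁|², c² |a₂|²) ≤ min (|a₁|², |a₂|²)` since `c² + s² = 1`,
with equality at `θ = π / 2`.
-/

namespace QI

section Diagonal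

variable {κ : Type} [Fintype κ] [DecidableEq κ]

lemma re_rayleigh_diagonal (d : κ → ℝ) (v : κ → ℂ) :
    (∑ i, ∑ j, star (v i) * Matrix.diagonal (fun i => (d i : ℂ)) i j * v j).re =
      ∑ i, d i * Complex.normSq (v i) := by
  simp only [Matrix.diagonal_apply, mul_ite, ite_mul, mul_zero, zero_mul,
    Finset.sum_ite_eq, Finset.mem_univ, if_true, Complex.re_sum]
  refine Finset.sum_congr rfl fun i _ => ?_
  rw [Complex.star_def, mul_comm, ← mul_assoc, Complex.mul_conj, ← Complex.ofReal_mul,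
    Complex.ofReal_re, mul_comm]

lemma maxEig_diagonal [Nonempty κ] (d : κ → ℝ) :
    maxEig (Matrix.diagonal fun i => (d i : ℂ)) = Finset.univ.sup' Finset.univ_nonempty d := by
  set M := Finset.univ.sup' Finset.univ_nonempty d
  have bound : ∀ v : {v : κ → ℂ // ∑ i, Complex.normSq (v i) = 1},
      ∑ i, d i * Complex.normSq (v.1 i) ≤ M := fun ⟨v, hv⟩ =>
    calc ∑ i, d i * Complex.normSq (v i) ≤ ∑ i, M * Complex.normSq (v i) :=
          Finset.sum_le_sum fun i _ => mul_le_mul_of_nonneg_right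
            (Finset.le_sup' d (Finset.mem_univ i)) (Complex.normSq_nonneg _)
      _ = M := by rw [← Finset.mul_sum, hv, mul_one]
  obtain ⟨i₀, -, hi₀⟩ := Finset.exists_mem_eq_sup' Finset.univ_nonempty d
  have hunit : ∑ i, Complex.normSq ((Pi.single i₀ (1 : ℂ) : κ → ℂ) i) = 1 := by
    simp [Pi.single_apply, apply_ite Complex.normSq]
  have : Nonempty {v : κ → ℂ // ∑ i, Complex.normSq (v i) = 1} := ⟨⟨_, hunit⟩⟩
  unfold maxEig
  simp only [re_rayleigh_diagonal]
  refine le_antisymm (ciSup_le bound) ?_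
  calc M = ∑ i, d i * Complex.normSq ((Pi.single i₀ (1 : ℂ) : κ → ℂ) i) := by
        simp [Pi.single_apply, apply_ite Complex.normSq, hi₀, M]
    _ ≤ _ := le_ciSup (f := fun v : {v : κ → ℂ // ∑ i, Complex.normSq (v i) = 1} =>
        ∑ i, d i * Complex.normSq (v.1 i)) ⟨M, Set.forall_mem_range.2 bound⟩ ⟨_, hunit⟩

end Diagonal

lemma const_zero_ne_const_one {ι : Type} [Nonempty ι] :
    (fun _ : ι => (0 : Fin 2)) ≠ fun _ => 1 :=
  fun h => zero_ne_one (congrFun h (Classical.arbitrary ι))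

section GHZ

variable {ι : Type} [DecidableEq ι]

lemma merge_eq_const (A : Finset ι) (a : {i // i ∈ A} → Fin 2)
    (b : {i // i ∉ A} → Fin 2) (c : Fin 2) :
    merge A a b = (fun _ => c) ↔ (a = fun _ => c) ∧ (b = fun _ => c) := by
  simp only [funext_iff, merge, Subtype.forall]
  constructor
  · intro h
    exact ⟨fun i hi => by simpa [hi] using h i, fun i hi => by simpa [hi] using h i⟩
  · rintro ⟨ha, hb⟩ i
    split_ifs with hi
    exacts [ha i hi, hb i hi]

lemma update_eq_const (r : ι) (v : Fin 2) (b : {i // i ≠ r} → Fin 2) (c : Fin 2) :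
    (fun i => if h : i = r then v else b ⟨i, h⟩) = (fun _ => c) ↔
      v = c ∧ b = fun _ => c := by
  simp only [funext_iff, Subtype.forall]
  constructor
  · intro h
    exact ⟨by simpa using h r, fun i hi => by simpa [hi] using h i⟩
  · rintro ⟨rfl, hb⟩ i
    split_ifs with hi
    exacts [rfl, hb i hi]

variable [Fintype ι]

lemma nsq_ghz [Nonempty ι] (b1 b2 : ℂ) :
    nsq (ghz b1 b2 : PureState ι) = Complex.normSq b1 + Complex.normSq b2 := by
  have hne := const_zero_ne_const_one (ι := ι)
  rw [nsq, Fintype.sum_eq_add _ _ hne fun x hx => by simp [ghz, hx.1, hx.2]]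
  simp [ghz, hne.symm]

lemma sup'_normSq_ghz [Nonempty ι] (b1 b2 : ℂ) :
    Finset.univ.sup' Finset.univ_nonempty
        (fun x => Complex.normSq ((ghz b1 b2 : PureState ι) x)) =
      max (Complex.normSq b1) (Complex.normSq b2) := by
  have hne := const_zero_ne_const_one (ι := ι)
  refine le_antisymm (Finset.sup'_le _ _ fun x _ => ?_) (max_le ?_ ?_)
  · unfold ghz
    split_ifs
    exacts [le_max_left _ _, le_max_right _ _,
      by simpa using le_max_of_le_left (Complex.normSq_nonneg b1)]
  · exact Finset.le_sup'_of_le _ (Finset.mem_univ fun _ => 0) (by simp [ghz])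
  · exact Finset.le_sup'_of_le _ (Finset.mem_univ fun _ => 1) (by simp [ghz, hne.symm])

lemma rdm_ghz (b1 b2 : ℂ) (A : Finset ι) [Nonempty {i // i ∈ A}] [Nonempty {i // i ∉ A}] :
    rdm (ghz b1 b2 : PureState ι) A =
      Matrix.diagonal fun a => (Complex.normSq ((ghz b1 b2 : PureState {i // i ∈ A}) a) : ℂ) := by
  have hA := const_zero_ne_const_one (ι := {i // i ∈ A})
  have hB := const_zero_ne_const_one (ι := {i // i ∉ A})
  funext a a'
  simp only [rdm, ghz, merge_eq_const, Matrix.diagonal_apply]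
  by_cases h0 : a = fun _ => 0 <;> by_cases h1 : a = fun _ => 1 <;>
    by_cases h0' : a' = fun _ => 0 <;> by_cases h1' : a' = fun _ => 1 <;>
    simp_all [hA.symm, hB.symm, Finset.sum_ite_eq', Complex.mul_conj, eq_comm (b := a')]

lemma GGM_ghz [Nontrivial ι] (b1 b2 : ℂ) :
    GGM (ghz b1 b2 : PureState ι) = 1 - max (Complex.normSq b1) (Complex.normSq b2) := by
  have hbipart : ∀ A : {A : Finset ι // A.Nonempty ∧ A ≠ Finset.univ},
      maxEig (rdm (ghz b1 b2 : PureState ι) A.1) =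
        max (Complex.normSq b1) (Complex.normSq b2) := by
    rintro ⟨A, hA, hA'⟩
    have : Nonempty {i // i ∈ A} := hA.to_subtype
    have : Nonempty {i // i ∉ A} := by
      simpa [Finset.eq_univ_iff_forall] using hA'
    rw [rdm_ghz, maxEig_diagonal, sup'_normSq_ghz]
  obtain ⟨i, j, hij⟩ := exists_pair_ne ι
  have : Nonempty {A : Finset ι // A.Nonempty ∧ A ≠ Finset.univ} :=
    ⟨⟨{i}, Finset.singleton_nonempty i, fun h => hij.symm <|
      Finset.mem_singleton.1 (h ▸ Finset.mem_univ j)⟩⟩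
  rw [GGM, iSup_congr hbipart, ciSup_const]

lemma normalize_ghz (b1 b2 : ℂ) :
    normalize (ghz b1 b2 : PureState ι) =
      ghz (b1 / (Real.sqrt (nsq (ghz b1 b2 : PureState ι)) : ℂ))
        (b2 / (Real.sqrt (nsq (ghz b1 b2 : PureState ι)) : ℂ)) := by
  funext x
  unfold normalize ghz
  split_ifs <;> simp

lemma nsq_mul_GGM_normalize_ghz [Nontrivial ι] (b1 b2 : ℂ) :
    nsq (ghz b1 b2 : PureState ι) * GGM (normalize (ghz b1 b2 : PureState ι)) =
      min (Complex.normSq b1) (Complex.normSq b2) := by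
  have h1 := Complex.normSq_nonneg b1
  have h2 := Complex.normSq_nonneg b2
  rw [normalize_ghz, GGM_ghz, nsq_ghz]
  rcases (add_nonneg h1 h2).eq_or_lt with hzero | hpos
  · obtain ⟨hb1, hb2⟩ := (add_eq_zero_iff_of_nonneg h1 h2).1 hzero.symm
    rw [← hzero, zero_mul, hb1, hb2, min_self]
  · rw [Complex.normSq_div, Complex.normSq_div, Complex.normSq_ofReal,
      Real.mul_self_sqrt hpos.le, max_div_div_right hpos.le, mul_sub, mul_one,
      mul_div_cancel₀ _ hpos.ne', ← min_add_max, add_sub_cancel_right]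

lemma collapse_ghz (r : ι) [Nonempty {i // i ≠ r}] (b1 b2 : ℂ) (ξ : Fin 2 → ℂ) :
    collapse (ghz b1 b2 : PureState ι) r ξ = ghz (ξ 0 * b1) (ξ 1 * b2) := by
  have hne := const_zero_ne_const_one (ι := {i // i ≠ r})
  funext b
  simp only [collapse, ghz, Fin.sum_univ_two, update_eq_const]
  by_cases h0 : b = fun _ => 0 <;> by_cases h1 : b = fun _ => 1 <;> simp_all [hne.symm]

end GHZ

lemma normSq_xiUp (θ φ : ℝ) :
    Complex.normSq (xiUp θ φ 0) = Real.cos (θ / 2) ^ 2 ∧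
      Complex.normSq (xiUp θ φ 1) = Real.sin (θ / 2) ^ 2 := by
  simp only [xiUp, Matrix.cons_val_zero, Matrix.cons_val_one, Complex.normSq_mul,
    Complex.normSq_ofReal, Complex.normSq_eq_norm_sq (Complex.exp _),
    Complex.norm_exp_ofReal_mul_I]
  constructor <;> ring

lemma normSq_xiDn (θ φ : ℝ) :
    Complex.normSq (xiDn θ φ 0) = Real.sin (θ / 2) ^ 2 ∧
      Complex.normSq (xiDn θ φ 1) = Real.cos (θ / 2) ^ 2 := by
  simp only [xiDn, Matrix.cons_val_zero, Matrix.cons_val_one, Complex.normSq_mul,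
    Complex.normSq_neg, Complex.normSq_ofReal, Complex.normSq_eq_norm_sq (Complex.exp _),
    ← neg_mul, ← Complex.ofReal_neg, Complex.norm_exp_ofReal_mul_I]
  constructor <;> ring

section Localizable

variable {ι : Type} [Fintype ι] [DecidableEq ι]

lemma avgGGM_ghz (r : ι) [Nontrivial {i // i ≠ r}] (a1 a2 : ℂ) (θ φ : ℝ) :
    avgGGM (ghz a1 a2 : PureState ι) r θ φ =
      min (Real.cos (θ / 2) ^ 2 * Complex.normSq a1) (Real.sin (θ / 2) ^ 2 * Complex.normSq a2) +
        min (Real.sin (θ / 2) ^ 2 * Complex.normSq a1)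
          (Real.cos (θ / 2) ^ 2 * Complex.normSq a2) := by
  rw [avgGGM, collapse_ghz, collapse_ghz, nsq_mul_GGM_normalize_ghz, nsq_mul_GGM_normalize_ghz]
  simp only [Complex.normSq_mul, normSq_xiUp, normSq_xiDn]

lemma LGGM_ghz (r : ι) [Nontrivial {i // i ≠ r}] (a1 a2 : ℂ) :
    LGGM (ghz a1 a2 : PureState ι) r = min (Complex.normSq a1) (Complex.normSq a2) := by
  refine IsGreatest.csSup_eq ⟨⟨Real.pi / 2, ⟨by positivity, by linarith [Real.pi_pos]⟩,
    0, ⟨le_rfl, by positivity⟩, ?_⟩, ?_⟩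
  · have hcos : Real.cos (Real.pi / 2 / 2) ^ 2 = 1 / 2 := by
      rw [Real.cos_sq, show 2 * (Real.pi / 2 / 2) = Real.pi / 2 by ring, Real.cos_pi_div_two]
      norm_num
    have hsin : Real.sin (Real.pi / 2 / 2) ^ 2 = 1 / 2 := by
      rw [Real.sin_sq, hcos]
      norm_num
    rw [avgGGM_ghz, hcos, hsin, ← mul_min_of_nonneg _ _ (by norm_num : (0 : ℝ) ≤ 1 / 2)]
    ring
  · rintro _ ⟨θ, -, φ, -, rfl⟩
    rw [avgGGM_ghz]
    calc _ ≤ min (Real.cos (θ / 2) ^ 2 * Complex.normSq a1 +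
            Real.sin (θ / 2) ^ 2 * Complex.normSq a1)
          (Real.sin (θ / 2) ^ 2 * Complex.normSq a2 +
            Real.cos (θ / 2) ^ 2 * Complex.normSq a2) := min_add_min_le_min_add_add
      _ = min (Complex.normSq a1) (Complex.normSq a2) := by
        rw [← add_mul, ← add_mul, Real.cos_sq_add_sin_sq, Real.sin_sq_add_cos_sq, one_mul,
          one_mul]

end Localizable

/-- The LGGM of the `N`-qubit generalized GHZ state under single-qubit
projective measurement equals its GGM, `min {|a₁|², |a₂|²}`. -/
theorem stmt5 (N : ℕ) (hN : 3 ≤ N) (a1 a2 : ℂ) :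
    LGGM (ghz a1 a2 : PureState (Fin N)) ⟨0, by omega⟩ =
      min (Complex.normSq a1) (Complex.normSq a2) := by
  have : Nontrivial {i : Fin N // i ≠ ⟨0, by omega⟩} :=
    nontrivial_of_ne ⟨⟨1, by omega⟩, by simp⟩ ⟨⟨2, by omega⟩, by simp⟩ (by simp)
  exact LGGM_ghz _ a1 a2

end QI
end
end

section
/- For any three-qubit generalized W state |W₃⟩ = a₁|100⟩ + a₂|010⟩ + a₃|001⟩ with Σ|a_i|² = 1, the LGGM obtained by projectively measuring qubit r equals min{|a_j|², |a_k|²} where {j,k} = {1,2,3} \ {r}, and this is greater than or equal to the GGM min{|a₁|², |a₂|², |a₃|²} of the original state. -/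
open scoped BigOperators

noncomputable section

namespace QI

variable {ι : Type} [Fintype ι] [DecidableEq ι]

/-! Measuring qubit `r` of `Σᵢ aᵢ|1ᵢ⟩` with outcome `ξ` leaves `ξ₁aᵣ|00⟩ + ξ₀(aⱼ|10⟩ + aₖ|01⟩)`
on the other two qubits. For such a state `ψ` the diagonal entry `‖ψ‖² - |ξ₀aⱼ|²` of the reduced
state of qubit `j` bounds its top eigenvalue from below, so `‖ψ‖² GGM(ψ/‖ψ‖) ≤ |ξ₀aⱼ|²`, and
likewise for `k`. The two outcomes have `|ξ₀|² = cos²(θ/2)` and `sin²(θ/2)`, so the average is at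
most `min(|aⱼ|², |aₖ|²)`. The measurement `θ = π` attains this: it splits off the product branch
`aᵣ|00⟩`, and the other branch `aⱼ|10⟩ + aₖ|01⟩` has diagonal reduced states. -/

section MaxEig

variable {κ : Type} [Fintype κ]

lemma bddAbove_rayleigh (ρ : κ → κ → ℂ) :
    BddAbove (Set.range fun v : {v : κ → ℂ // ∑ i, Complex.normSq (v i) = 1} =>
      (∑ i, ∑ j, star (v.1 i) * ρ i j * v.1 j).re) := by
  refine ⟨∑ i, ∑ j, ‖ρ i j‖, ?_⟩
  rintro _ ⟨⟨v, hv⟩, rfl⟩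
  have hv_le : ∀ i, ‖v i‖ ≤ 1 := fun i => by
    rw [← sq_le_one_iff₀ (norm_nonneg _), Complex.sq_norm, ← hv]
    exact Finset.single_le_sum (fun i _ => Complex.normSq_nonneg (v i)) (Finset.mem_univ i)
  calc (∑ i, ∑ j, star (v i) * ρ i j * v j).re
      ≤ ∑ i, ∑ j, ‖star (v i) * ρ i j * v j‖ :=
        (Complex.re_le_norm _).trans <| (norm_sum_le _ _).trans <|
          Finset.sum_le_sum fun i _ => norm_sum_le _ _
    _ ≤ ∑ i, ∑ j, ‖ρ i j‖ := by
        gcongr with i _ j _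
        rw [norm_mul, norm_mul, norm_star]
        calc ‖v i‖ * ‖ρ i j‖ * ‖v j‖ ≤ 1 * ‖ρ i j‖ * 1 := by gcongr <;> exact hv_le _
          _ = ‖ρ i j‖ := by ring

lemma le_maxEig (ρ : κ → κ → ℂ) {v : κ → ℂ} (hv : ∑ i, Complex.normSq (v i) = 1) :
    (∑ i, ∑ j, star (v i) * ρ i j * v j).re ≤ maxEig ρ :=
  le_ciSup (bddAbove_rayleigh ρ) ⟨v, hv⟩

lemma re_apply_self_le_maxEig [DecidableEq κ] (ρ : κ → κ → ℂ) (i : κ) :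
    (ρ i i).re ≤ maxEig ρ := by
  simpa [Pi.single_apply] using le_maxEig ρ (v := Pi.single i 1) (by simp [Pi.single_apply])

lemma maxEig_le [Nonempty κ] [DecidableEq κ] {ρ : κ → κ → ℂ} {M : ℝ}
    (h : ∀ v : κ → ℂ, ∑ i, Complex.normSq (v i) = 1 →
      (∑ i, ∑ j, star (v i) * ρ i j * v j).re ≤ M) : maxEig ρ ≤ M := by
  have : Nonempty {v : κ → ℂ // ∑ i, Complex.normSq (v i) = 1} :=
    ⟨⟨Pi.single (Classical.arbitrary κ) 1, by simp [Pi.single_apply]⟩⟩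
  exact ciSup_le fun v => h v.1 v.2

lemma maxEig_zero : maxEig (fun _ _ => 0 : κ → κ → ℂ) = 0 := by
  simp [maxEig, Real.iSup_const_zero]

lemma maxEig_ofReal_mul {c : ℝ} (hc : 0 ≤ c) (ρ : κ → κ → ℂ) :
    maxEig (fun i j => (c : ℂ) * ρ i j) = c * maxEig ρ := by
  rw [maxEig, maxEig, Real.mul_iSup_of_nonneg hc]
  congr 1 with v
  simp only [← Complex.re_ofReal_mul, Finset.mul_sum, mul_left_comm (c : ℂ), mul_assoc]

lemma maxEig_comp_equiv {κ' : Type} [Fintype κ'] (e : κ ≃ κ') (ρ : κ' → κ' → ℂ) :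
    maxEig (fun i j => ρ (e i) (e j)) = maxEig ρ := by
  let f : (κ → ℂ) ≃ (κ' → ℂ) := e.arrowCongr (Equiv.refl ℂ)
  have hf : ∀ v i, f v (e i) = v i := fun v i => by simp [f]
  have hnorm : ∀ v : κ → ℂ, ∑ i, Complex.normSq (f v i) = ∑ i, Complex.normSq (v i) :=
    fun v => (Fintype.sum_equiv e _ _ fun i => by rw [hf]).symm
  have hform : ∀ v : κ → ℂ, ∑ i, ∑ j, star (f v i) * ρ i j * f v j =
      ∑ i, ∑ j, star (v i) * ρ (e i) (e j) * v j := fun v =>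
    (Fintype.sum_equiv e _ _ fun i =>
      Fintype.sum_equiv e _ _ fun j => by rw [hf, hf]).symm
  let g : {v : κ → ℂ // ∑ i, Complex.normSq (v i) = 1} ≃
      {v : κ' → ℂ // ∑ i, Complex.normSq (v i) = 1} :=
    f.subtypeEquiv fun v => by rw [hnorm]
  rw [maxEig, maxEig, ← g.iSup_comp]
  simp only [g, Equiv.subtypeEquiv_apply, hform]

lemma maxEig_diagonal_fin_two {ρ : Fin 2 → Fin 2 → ℂ} {x y : ℝ}
    (h00 : ρ 0 0 = x) (h11 : ρ 1 1 = y) (h01 : ρ 0 1 = 0) (h10 : ρ 1 0 = 0) :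
    maxEig ρ = max x y := by
  refine le_antisymm (maxEig_le fun v hv => ?_) (max_le ?_ ?_)
  · rw [Fin.sum_univ_two] at hv
    have hform : (∑ i, ∑ j, star (v i) * ρ i j * v j).re =
        x * Complex.normSq (v 0) + y * Complex.normSq (v 1) := by
      simp [Fin.sum_univ_two, h00, h11, h01, h10, Complex.normSq_apply]
      ring
    rw [hform]
    calc x * Complex.normSq (v 0) + y * Complex.normSq (v 1)
        ≤ max x y * Complex.normSq (v 0) + max x y * Complex.normSq (v 1) := 
          add_le_add (mul_le_mul_of_nonneg_right (le_max_left x y) (Complex.normSq_nonneg _))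
            (mul_le_mul_of_nonneg_right (le_max_right x y) (Complex.normSq_nonneg _))
      _ = max x y := by rw [← mul_add, hv, mul_one]
  · simpa [h00] using re_apply_self_le_maxEig ρ 0
  · simpa [h11] using re_apply_self_le_maxEig ρ 1

end MaxEig

section Normalize

lemma nsq_nonneg (ψ : PureState ι) : 0 ≤ nsq ψ :=
  Finset.sum_nonneg fun x _ => Complex.normSq_nonneg (ψ x)

lemma eq_zero_of_nsq_eq_zero {ψ : PureState ι} (h : nsq ψ = 0) : ψ = 0 := by
  funext x
  rw [nsq, Fintype.sum_eq_zero_iff_of_nonneg fun x => Complex.normSq_nonneg (ψ x)] at h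
  exact Complex.normSq_eq_zero.1 (congrFun h x)

lemma rdm_normalize (ψ : PureState ι) (A : Finset ι) :
    rdm (normalize ψ) A = fun a a' => (((nsq ψ)⁻¹ : ℝ) : ℂ) * rdm ψ A a a' := by
  have hsqrt : ((Real.sqrt (nsq ψ) : ℝ) : ℂ) * (Real.sqrt (nsq ψ) : ℝ) = (nsq ψ : ℝ) := by
    rw [← Complex.ofReal_mul, Real.mul_self_sqrt (nsq_nonneg ψ)]
  funext a a'
  simp only [rdm, normalize, Finset.mul_sum, star_div₀, Complex.star_def, Complex.conj_ofReal]
  refine Finset.sum_congr rfl fun b _ => ?_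
  rw [div_mul_div_comm, hsqrt, Complex.ofReal_inv]
  ring

lemma nsq_mul_GGM_normalize (ψ : PureState ι) :
    nsq ψ * GGM (normalize ψ) =
      nsq ψ - ⨆ A : {A : Finset ι // A.Nonempty ∧ A ≠ Finset.univ}, maxEig (rdm ψ A.1) := by
  rcases eq_or_ne (nsq ψ) 0 with h0 | h0
  · have hrdm : ∀ A, rdm ψ A = fun _ _ => 0 := fun A => by
      funext a a'
      simp [rdm, eq_zero_of_nsq_eq_zero h0]
    simp only [h0, hrdm, maxEig_zero, Real.iSup_const_zero, zero_mul, sub_zero]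
  · simp only [GGM, rdm_normalize, maxEig_ofReal_mul (inv_nonneg.2 (nsq_nonneg ψ)),
      ← Real.mul_iSup_of_nonneg (inv_nonneg.2 (nsq_nonneg ψ))]
    field_simp

end Normalize

def vacuumAddWState {κ : Type} [Fintype κ] [DecidableEq κ] (c₀ : ℂ) (c : κ → ℂ) :
    PureState κ :=
  fun x => (if x = 0 then c₀ else 0) + wState c x

section Collapse

lemma wState_apply_of_apply_eq_one (a : ι → ℂ) {x : ι → Fin 2} {r : ι} (hx : x r = 1) :
    wState a x = if x = basisVec r then a r else 0 :=
  Finset.sum_eq_single r (fun i _ hir => if_neg fun h => by simp [h, basisVec, hir.symm] at hx)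
    (by simp)

lemma wState_apply_of_apply_eq_zero (a : ι → ℂ) {x : ι → Fin 2} {r : ι} (hx : x r = 0) :
    wState a x = ∑ i : {i // i ≠ r}, if x = basisVec i.1 then a i else 0 := by
  rw [wState, Fintype.sum_eq_add_sum_subtype_ne _ r, if_neg fun h => by simp [h, basisVec] at hx,
    zero_add]

lemma extend_eq_basisVec_iff {κ : Type} [DecidableEq κ] {r : κ} (b : {i // i ≠ r} → Fin 2)
    (i : {i // i ≠ r}) :
    (fun l => if h : l = r then 0 else b ⟨l, h⟩) = basisVec i.1 ↔ b = basisVec i := by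
  simp only [funext_iff, basisVec, Subtype.forall, Subtype.ext_iff]
  refine ⟨fun h l hl => by simpa [hl] using h l, fun h l => ?_⟩
  by_cases hl : l = r
  · simp [hl, Ne.symm i.2]
  · simp [hl, h l hl]

lemma extend_eq_basisVec_self_iff {κ : Type} [DecidableEq κ] {r : κ} (b : {i // i ≠ r} → Fin 2) :
    (fun l => if h : l = r then 1 else b ⟨l, h⟩) = basisVec r ↔ b = 0 := by
  simp only [funext_iff, basisVec, Subtype.forall, Pi.zero_apply]
  refine ⟨fun h l hl => by simpa [hl] using h l, fun h l => ?_⟩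
  by_cases hl : l = r
  · simp [hl]
  · simp [hl, h l hl]

lemma collapse_wState (a : ι → ℂ) (r : ι) (ξ : Fin 2 → ℂ) :
    collapse (wState a) r ξ = vacuumAddWState (ξ 1 * a r) fun i : {i // i ≠ r} => ξ 0 * a i := by
  funext b
  rw [collapse, Fin.sum_univ_two, add_comm,
    wState_apply_of_apply_eq_one a (r := r) (by simp),
    wState_apply_of_apply_eq_zero a (r := r) (by simp)]
  simp only [vacuumAddWState, extend_eq_basisVec_self_iff, extend_eq_basisVec_iff, wState,
    Finset.mul_sum, mul_ite, mul_zero]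

end Collapse

section TwoQubit

variable {κ : Type} {u w : κ}

lemma eq_singleton_of_bipartition [Fintype κ] (huw : u ≠ w) (hcover : ∀ i, i = u ∨ i = w)
    {A : Finset κ} (hne : A.Nonempty) (hA : A ≠ Finset.univ) : A = {u} ∨ A = {w} := by
  obtain ⟨x, hx⟩ := hne
  obtain ⟨y, -, hy⟩ := Finset.exists_mem_notMem_of_card_lt_card
    (Finset.card_lt_card (Finset.ssubset_univ_iff.2 hA))
  have hA : A = {x} := Finset.eq_singleton_iff_unique_mem.2 ⟨hx, fun l hl => by
    rcases hcover l with rfl | rfl <;> rcases hcover x with rfl | rfl <;>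
      rcases hcover y with rfl | rfl <;> tauto⟩
  rcases hcover x with rfl | rfl <;> simp [hA]

lemma iSup_bipartition_eq_max [Fintype κ] (huw : u ≠ w) (hcover : ∀ i, i = u ∨ i = w)
    (f : Finset κ → ℝ) :
    ⨆ A : {A : Finset κ // A.Nonempty ∧ A ≠ Finset.univ}, f A.1 = max (f {u}) (f {w}) := by
  have hmem : ∀ i, ({i} : Finset κ).Nonempty ∧ {i} ≠ Finset.univ := fun i => ⟨by simp, fun h => by
    rcases hcover i with rfl | rfl
    · exact huw.symm (Finset.mem_singleton.1 (h ▸ Finset.mem_univ w))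
    · exact huw (Finset.mem_singleton.1 (h ▸ Finset.mem_univ u))⟩
  have : Nonempty {A : Finset κ // A.Nonempty ∧ A ≠ Finset.univ} := ⟨⟨{u}, hmem u⟩⟩
  refine le_antisymm (ciSup_le fun A => ?_) (max_le ?_ ?_)
  · rcases eq_singleton_of_bipartition huw hcover A.2.1 A.2.2 with h | h <;> simp [h]
  · exact Finite.le_ciSup (fun A : {A : Finset κ // A.Nonempty ∧ A ≠ Finset.univ} => f A.1)
      ⟨_, hmem u⟩
  · exact Finite.le_ciSup (fun A : {A : Finset κ // A.Nonempty ∧ A ≠ Finset.univ} => f A.1)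
      ⟨_, hmem w⟩

lemma ciInf_eq_min_of_forall_eq_or_eq [Finite κ] (hcover : ∀ i, i = u ∨ i = w) (f : κ → ℝ) :
    ⨅ i, f i = min (f u) (f w) :=
  le_antisymm (le_min (Finite.ciInf_le f u) (Finite.ciInf_le f w))
    (have : Nonempty κ := ⟨u⟩
    le_ciInf fun i => by rcases hcover i with rfl | rfl <;> simp)

variable [DecidableEq κ]

def amp (u : κ) (ψ : PureState κ) (s t : Fin 2) : ℂ :=
  ψ (fun i => if i = u then s else t)

lemma two_qubit_config_eq_iff (huw : u ≠ w) (hcover : ∀ i, i = u ∨ i = w) (s t : Fin 2)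
    (x : κ → Fin 2) : (fun i => if i = u then s else t) = x ↔ s = x u ∧ t = x w := by
  refine ⟨fun h => by simp [← h, huw.symm], fun ⟨hs, ht⟩ => funext fun i => ?_⟩
  rcases hcover i with rfl | rfl
  · simp [hs]
  · simp [ht, huw.symm]

lemma amp_swap (huw : u ≠ w) (hcover : ∀ i, i = u ∨ i = w) (ψ : PureState κ) (s t : Fin 2) :
    amp w ψ s t = amp u ψ t s := by
  rw [amp, amp, (two_qubit_config_eq_iff huw hcover t s _).2]
  simp [huw]

variable [Fintype κ]

lemma nsq_eq_sum_amp (huw : u ≠ w) (hcover : ∀ i, i = u ∨ i = w) (ψ : PureState κ) :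
    nsq ψ = ∑ s, ∑ t, Complex.normSq (amp u ψ s t) := by
  let e : Fin 2 × Fin 2 ≃ (κ → Fin 2) :=
    { toFun := fun p i => if i = u then p.1 else p.2
      invFun := fun x => (x u, x w)
      left_inv := fun p => by simp [huw.symm]
      right_inv := fun x => (two_qubit_config_eq_iff huw hcover _ _ x).2 ⟨rfl, rfl⟩ }
  rw [nsq, ← e.sum_comp, Fintype.sum_prod_type]
  rfl

lemma maxEig_rdm_singleton (huw : u ≠ w) (hcover : ∀ i, i = u ∨ i = w) (ψ : PureState κ) :
    maxEig (rdm ψ {u}) = maxEig fun s s' => ∑ t, amp u ψ s t * star (amp u ψ s' t) := by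
  have hmerge : ∀ s t : Fin 2,
      merge {u} (fun _ => s) (fun _ => t) = fun i => if i = u then s else t :=
    fun s t => funext fun i => by by_cases hi : i = u <;> simp [merge, hi]
  let eA : Fin 2 ≃ ({i // i ∈ ({u} : Finset κ)} → Fin 2) :=
    { toFun := fun s _ => s
      invFun := fun a => a ⟨u, Finset.mem_singleton_self u⟩
      left_inv := fun _ => rfl
      right_inv := fun a => funext fun ⟨i, hi⟩ => by
        obtain rfl := Finset.mem_singleton.1 hi; rfl }
  let eB : Fin 2 ≃ ({i // i ∉ ({u} : Finset κ)} → Fin 2) :=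
    { toFun := fun t _ => t
      invFun := fun b => b ⟨w, by simpa using huw.symm⟩
      left_inv := fun _ => rfl
      right_inv := fun b => funext fun ⟨i, hi⟩ => by
        obtain rfl := (hcover i).resolve_left (by simpa using hi); rfl }
  rw [← maxEig_comp_equiv eA]
  congr 1
  funext s s'
  rw [rdm, ← eB.sum_comp]
  simp only [eA, eB, Equiv.coe_fn_mk, hmerge, amp]

lemma nsq_mul_GGM_normalize_two (huw : u ≠ w) (hcover : ∀ i, i = u ∨ i = w) (ψ : PureState κ) :
    nsq ψ * GGM (normalize ψ) = nsq ψ - max (maxEig (rdm ψ {u})) (maxEig (rdm ψ {w})) := by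
  rw [nsq_mul_GGM_normalize, iSup_bipartition_eq_max huw hcover fun A => maxEig (rdm ψ A)]

lemma sum_normSq_amp_zero_le_maxEig (huw : u ≠ w) (hcover : ∀ i, i = u ∨ i = w)
    (ψ : PureState κ) : ∑ t, Complex.normSq (amp u ψ 0 t) ≤ maxEig (rdm ψ {u}) := by
  rw [maxEig_rdm_singleton huw hcover]
  simpa [Complex.re_sum, Complex.mul_conj] using
    re_apply_self_le_maxEig (fun s s' : Fin 2 => ∑ t, amp u ψ s t * star (amp u ψ s' t)) 0

lemma nsq_mul_GGM_normalize_le_sum_normSq_amp (huw : u ≠ w) (hcover : ∀ i, i = u ∨ i = w)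
    (ψ : PureState κ) :
    nsq ψ * GGM (normalize ψ) ≤ ∑ t, Complex.normSq (amp u ψ 1 t) := by
  have := sum_normSq_amp_zero_le_maxEig huw hcover ψ
  rw [nsq_mul_GGM_normalize_two huw hcover, nsq_eq_sum_amp huw hcover, Fin.sum_univ_two]
  linarith [le_max_left (maxEig (rdm ψ {u})) (maxEig (rdm ψ {w}))]

lemma maxEig_rdm_singleton_of_orthogonal (huw : u ≠ w) (hcover : ∀ i, i = u ∨ i = w)
    {ψ : PureState κ} (h : ∑ t, amp u ψ 0 t * star (amp u ψ 1 t) = 0) :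
    maxEig (rdm ψ {u}) =
      max (∑ t, Complex.normSq (amp u ψ 0 t)) (∑ t, Complex.normSq (amp u ψ 1 t)) := by
  rw [maxEig_rdm_singleton huw hcover]
  refine maxEig_diagonal_fin_two ?_ ?_ h ?_
  · simp [Complex.mul_conj]
  · simp [Complex.mul_conj]
  · simpa [star_sum, mul_comm] using congrArg star h

end TwoQubit

section VacuumAddWState

variable {κ : Type} [Fintype κ] [DecidableEq κ] {u w : κ}

lemma amp_vacuumAddWState (huw : u ≠ w) (hcover : ∀ i, i = u ∨ i = w) (c₀ : ℂ) (c : κ → ℂ)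
    (s t : Fin 2) : amp u (vacuumAddWState c₀ c) s t = ![![c₀, c w], ![c u, 0]] s t := by
  have huniv : (Finset.univ : Finset κ) = {u, w} := by ext i; simpa using hcover i
  simp only [amp, vacuumAddWState, wState, huniv, Finset.sum_pair huw,
    two_qubit_config_eq_iff huw hcover, Pi.zero_apply, basisVec, if_pos, if_neg huw.symm]
  fin_cases s <;> fin_cases t <;> simp [huw]

lemma nsq_mul_GGM_normalize_vacuumAddWState_le (huw : u ≠ w) (hcover : ∀ i, i = u ∨ i = w)
    (c₀ : ℂ) (c : κ → ℂ) :
    nsq (vacuumAddWState c₀ c) * GGM (normalize (vacuumAddWState c₀ c)) ≤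
      min (Complex.normSq (c u)) (Complex.normSq (c w)) := by
  have hu := nsq_mul_GGM_normalize_le_sum_normSq_amp huw hcover (vacuumAddWState c₀ c)
  have hw := nsq_mul_GGM_normalize_le_sum_normSq_amp huw.symm (fun i => (hcover i).symm)
    (vacuumAddWState c₀ c)
  simp only [amp_swap huw hcover, Fin.sum_univ_two, amp_vacuumAddWState huw hcover,
    Matrix.cons_val_zero, Matrix.cons_val_one, Complex.normSq_zero, add_zero] at hu hw
  exact le_min hu hw

lemma nsq_mul_GGM_normalize_vacuumAddWState (huw : u ≠ w) (hcover : ∀ i, i = u ∨ i = w)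
    {c₀ : ℂ} {c : κ → ℂ} (hu : c₀ * c u = 0) (hw : c₀ * c w = 0) :
    nsq (vacuumAddWState c₀ c) * GGM (normalize (vacuumAddWState c₀ c)) =
      min (Complex.normSq (c u)) (Complex.normSq (c w)) := by
  have hcover' : ∀ i, i = w ∨ i = u := fun i => (hcover i).symm
  -- the hypotheses make both reduced states diagonal
  rw [nsq_mul_GGM_normalize_two huw hcover,
    maxEig_rdm_singleton_of_orthogonal huw hcover (by
      simpa [Fin.sum_univ_two, amp_vacuumAddWState huw hcover] using mul_eq_zero.1 hu),
    maxEig_rdm_singleton_of_orthogonal huw.symm hcover' (by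
      simpa [Fin.sum_univ_two, amp_swap huw hcover, amp_vacuumAddWState huw hcover] using
        mul_eq_zero.1 hw),
    nsq_eq_sum_amp huw hcover]
  simp only [amp_swap huw hcover, Fin.sum_univ_two, amp_vacuumAddWState huw hcover,
    Matrix.cons_val_zero, Matrix.cons_val_one, Complex.normSq_zero, add_zero]
  rcases eq_or_ne c₀ 0 with h0 | h0
  · rw [h0, Complex.normSq_zero, zero_add, zero_add, max_comm (Complex.normSq (c u)), max_self]
    rcases le_total (Complex.normSq (c u)) (Complex.normSq (c w)) with h | h
    · rw [max_eq_left h, min_eq_left h]; ring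
    · rw [max_eq_right h, min_eq_right h]; ring
  · simp [(mul_eq_zero.1 hu).resolve_left h0, (mul_eq_zero.1 hw).resolve_left h0,
      Complex.normSq_nonneg]

end VacuumAddWState

lemma normSq_xiUp_zero (θ φ : ℝ) : Complex.normSq (xiUp θ φ 0) = Real.cos (θ / 2) ^ 2 := by
  rw [show xiUp θ φ 0 = (Real.cos (θ / 2) : ℂ) from rfl, Complex.normSq_ofReal, sq]

lemma normSq_xiDn_zero (θ φ : ℝ) : Complex.normSq (xiDn θ φ 0) = Real.sin (θ / 2) ^ 2 := by
  have hexp : Complex.normSq (Complex.exp (-(φ * Complex.I))) = 1 := by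
    rw [Complex.normSq_eq_norm_sq, ← neg_mul, ← Complex.ofReal_neg,
      Complex.norm_exp_ofReal_mul_I, one_pow]
  rw [show xiDn θ φ 0 = -Complex.exp (-(φ * Complex.I)) * (Real.sin (θ / 2) : ℂ) from rfl,
    Complex.normSq_mul, Complex.normSq_neg, hexp, Complex.normSq_ofReal, one_mul, sq]

section Measurement

variable (a : ι → ℂ) {r : ι} {u w : {i // i ≠ r}}

lemma avgGGM_wState_le (huw : u ≠ w) (hcover : ∀ i, i = u ∨ i = w) (θ φ : ℝ) :
    avgGGM (wState a) r θ φ ≤ min (Complex.normSq (a u)) (Complex.normSq (a w)) := by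
  have hbranch := nsq_mul_GGM_normalize_vacuumAddWState_le huw hcover
  have hmin : ∀ ξ : Fin 2 → ℂ,
      min (Complex.normSq (ξ 0 * a u)) (Complex.normSq (ξ 0 * a w)) =
        Complex.normSq (ξ 0) * min (Complex.normSq (a u)) (Complex.normSq (a w)) := fun ξ => by
    rw [Complex.normSq_mul, Complex.normSq_mul, mul_min_of_nonneg _ _ (Complex.normSq_nonneg _)]
  calc avgGGM (wState a) r θ φ
      ≤ Complex.normSq (xiUp θ φ 0) * min (Complex.normSq (a u)) (Complex.normSq (a w)) +
        Complex.normSq (xiDn θ φ 0) * min (Complex.normSq (a u)) (Complex.normSq (a w)) := by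
        rw [avgGGM, collapse_wState, collapse_wState, ← hmin, ← hmin]
        exact add_le_add (hbranch _ _) (hbranch _ _)
    _ = min (Complex.normSq (a u)) (Complex.normSq (a w)) := by
        rw [normSq_xiUp_zero, normSq_xiDn_zero, ← add_mul, Real.cos_sq_add_sin_sq, one_mul]

lemma avgGGM_wState_pi (huw : u ≠ w) (hcover : ∀ i, i = u ∨ i = w) :
    avgGGM (wState a) r Real.pi 0 = min (Complex.normSq (a u)) (Complex.normSq (a w)) := by
  rw [avgGGM, collapse_wState, collapse_wState,
    nsq_mul_GGM_normalize_vacuumAddWState huw hcover (by simp [xiUp]) (by simp [xiUp]),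
    nsq_mul_GGM_normalize_vacuumAddWState huw hcover (by simp [xiDn]) (by simp [xiDn])]
  simp [xiUp, xiDn]

lemma LGGM_wState (huw : u ≠ w) (hcover : ∀ i, i = u ∨ i = w) :
    LGGM (wState a) r = min (Complex.normSq (a u)) (Complex.normSq (a w)) := by
  refine IsGreatest.csSup_eq ⟨⟨Real.pi, ⟨Real.pi_nonneg, le_rfl⟩, 0, ⟨le_rfl, Real.two_pi_pos⟩,
    (avgGGM_wState_pi a huw hcover).symm⟩, ?_⟩
  rintro _ ⟨θ, -, φ, -, rfl⟩
  exact avgGGM_wState_le a huw hcover θ φ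

end Measurement

theorem stmt6_general (a : Fin 3 → ℂ) (r : Fin 3) :
    LGGM (wState a) r = (⨅ i : {i : Fin 3 // i ≠ r}, Complex.normSq (a i.1)) ∧
    (⨅ i, Complex.normSq (a i)) ≤ LGGM (wState a) r := by
  obtain ⟨u, w, huw, hcover⟩ : ∃ u w : {i : Fin 3 // i ≠ r}, u ≠ w ∧ ∀ i, i = u ∨ i = w := by
    revert r; decide
  rw [LGGM_wState a huw hcover]
  exact ⟨(ciInf_eq_min_of_forall_eq_or_eq hcover fun i => Complex.normSq (a i.1)).symm,
    le_min (Finite.ciInf_le _ _) (Finite.ciInf_le _ _)⟩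

/-- For any three-qubit generalized W state with `Σᵢ |aᵢ|² = 1`, the LGGM
obtained by projectively measuring qubit `r` equals `min {|aⱼ|², |aₖ|²}`
(the minimum over the two unmeasured coefficients), and this is at least
the GGM `min {|a₁|², |a₂|², |a₃|²}` of the original state. -/
theorem stmt6 (a : Fin 3 → ℂ) (h : ∑ i, Complex.normSq (a i) = 1) (r : Fin 3) :
    LGGM (wState a) r = (⨅ i : {i : Fin 3 // i ≠ r}, Complex.normSq (a i.1)) ∧
    (⨅ i, Complex.normSq (a i)) ≤ LGGM (wState a) r :=
  stmt6_general a r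

end QI
end
end
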